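/- Let (ε_k)_{k∈ℕ} be a stationary sequence of ℝ^d-valued random variables with strong mixing coefficients (α_k) satisfying α_k → 0 as k → ∞, and let F : ℝ^d × [0,1] → ℝ be measurable with E F(ε₁,t) = 0 for all t ∈ [0,1], sup_{t∈[0,1]} E|F(ε₁,t)| < ∞, and lim_{M→∞} sup_{t∈[0,1]} E[|F(ε₁,t)| 1_{|F(ε₁,t)|>M}] = 0. Then (1/n) ∑_{k=1}^n F(ε_k, k/n) converges in probability to 0 as n → ∞. -/

import Mathlib

/-!
Fix `δ > 0` and a level `M` from the uniform integrability, and truncate each `F(ε_k, k/n)` at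
`M + 1`. The recentred truncations `Z_{n,k}` are bounded and `σ(ε_k)`-measurable, so the
covariance inequality for strongly mixing sequences gives `|E[Z_{n,j} Z_{n,k}]| ≤ 2 b² α_{|j-k|}`.
Hence the second moment of their average is at most `4 b² n⁻¹ ∑_{m<n} α_m`, a Cesàro mean of
`α_m → 0`, and by Chebyshev's inequality this average tends to `0` in probability. By
stationarity each remainder `F(ε_k, t) - trunc F(ε_k, t) + E[trunc F(ε₁, t)]` has the law of the
same expression in `ε₁`, whose `L¹` norm is at most `2δ` by uniform integrability and centring;
Markov's inequality then bounds the remainder in probability, and `δ` is arbitrary.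
-/

open MeasureTheory ProbabilityTheory Filter
open scoped BigOperators Topology

/-- The strong mixing (α-mixing) coefficients of a sequence `(ε_k)`:
`α_0 = 1/2` and, for `k ≥ 1`,
`α_k = 2 sup |P(A ∩ B) − P(A) P(B)|`, the supremum being over `ℓ ∈ ℕ`,
`A ∈ σ(ε_i : i ≤ ℓ)` and `B ∈ σ(ε_i : i ≥ k + ℓ)`. -/
noncomputable def alphaMix {Ω : Type*} [MeasurableSpace Ω] (P : Measure Ω)
    {E : Type*} [MeasurableSpace E] (ε : ℕ → Ω → E) : ℕ → ℝ
  | 0 => 1/2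
  | (k+1) => 2 * sSup {x : ℝ | ∃ (ℓ : ℕ) (A B : Set Ω),
      MeasurableSet[⨆ i ∈ {i : ℕ | i ≤ ℓ}, MeasurableSpace.comap (ε i) inferInstance] A ∧
      MeasurableSet[⨆ i ∈ {i : ℕ | k + 1 + ℓ ≤ i}, MeasurableSpace.comap (ε i) inferInstance] B ∧
      x = |(P (A ∩ B)).toReal - (P A).toReal * (P B).toReal|}

section Covariance
variable {Ω : Type*} {m m' m0 : MeasurableSpace Ω} {μ : Measure Ω}

lemma integral_abs_le_two_mul_of_abs_setIntegral_le (hm : m ≤ m0) {φ : Ω → ℝ}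
    (hφm : StronglyMeasurable[m] φ) (hφ : Integrable φ μ) {c : ℝ}
    (hc : ∀ A, MeasurableSet[m] A → |∫ ω in A, φ ω ∂μ| ≤ c) :
    ∫ ω, |φ ω| ∂μ ≤ 2 * c := by
  set A := {ω | 0 ≤ φ ω}
  have hAm : MeasurableSet[m] A := stronglyMeasurable_const.measurableSet_le hφm
  have hA : MeasurableSet A := hm _ hAm
  have hpos : ∫ ω in A, |φ ω| ∂μ = ∫ ω in A, φ ω ∂μ :=
    setIntegral_congr_fun hA fun ω hω => abs_of_nonneg hω
  have hneg : ∫ ω in Aᶜ, |φ ω| ∂μ = -∫ ω in Aᶜ, φ ω ∂μ := by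
    rw [← integral_neg]
    exact setIntegral_congr_fun hA.compl fun ω hω => abs_of_neg (not_le.1 hω)
  rw [← integral_add_compl hA hφ.abs, hpos, hneg]
  linarith [(abs_le.1 (hc A hAm)).2, (abs_le.1 (hc Aᶜ hAm.compl)).1]

lemma abs_integral_mul_sub_le_of_abs_setIntegral_sub_le (hm : m ≤ m0) [IsProbabilityMeasure μ]
    {X Y : Ω → ℝ} {a c : ℝ} (hX : StronglyMeasurable[m] X) (ha : 0 ≤ a)
    (hXa : ∀ ω, |X ω| ≤ a) (hY : Integrable Y μ)
    (hc : ∀ A, MeasurableSet[m] A → |∫ ω in A, Y ω ∂μ - μ.real A * ∫ ω, Y ω ∂μ| ≤ c) :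
    |∫ ω, X ω * Y ω ∂μ - (∫ ω, X ω ∂μ) * ∫ ω, Y ω ∂μ| ≤ 2 * a * c := by
  have hXa' : ∀ᵐ ω ∂μ, ‖X ω‖ ≤ a := ae_of_all _ hXa
  have hXm : AEStronglyMeasurable X μ := (hX.mono hm).aestronglyMeasurable
  set φ : Ω → ℝ := fun ω => μ[Y | m] ω - ∫ ω, Y ω ∂μ
  have hφ : Integrable φ μ := integrable_condExp.sub (integrable_const _)
  have hcov : ∫ ω, X ω * Y ω ∂μ - (∫ ω, X ω ∂μ) * ∫ ω, Y ω ∂μ = ∫ ω, X ω * φ ω ∂μ := by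
    have hpull : ∫ ω, X ω * Y ω ∂μ = ∫ ω, X ω * μ[Y | m] ω ∂μ := by
      have := integral_congr_ae (condExp_stronglyMeasurable_mul_of_bound hm hX hY a hXa')
      rwa [integral_condExp hm] at this
    simp only [φ, mul_sub]
    rw [hpull, integral_sub (integrable_condExp.bdd_mul hXm hXa')
      ((Integrable.of_bound hXm a hXa').mul_const _), integral_mul_const]
  have hφA : ∀ A, MeasurableSet[m] A → |∫ ω in A, φ ω ∂μ| ≤ c := by
    intro A hA
    rw [integral_sub integrable_condExp.integrableOn (integrable_const _),
      setIntegral_condExp hm hY hA, setIntegral_const, smul_eq_mul]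
    exact hc A hA
  calc |∫ ω, X ω * Y ω ∂μ - (∫ ω, X ω ∂μ) * ∫ ω, Y ω ∂μ|
      ≤ ∫ ω, |X ω * φ ω| ∂μ := hcov ▸ abs_integral_le_integral_abs
    _ ≤ ∫ ω, a * |φ ω| ∂μ :=
        integral_mono (hφ.bdd_mul hXm hXa').abs (hφ.abs.const_mul a) fun ω => by
          rw [abs_mul]; exact mul_le_mul_of_nonneg_right (hXa ω) (abs_nonneg _)
    _ = a * ∫ ω, |φ ω| ∂μ := integral_const_mul a _
    _ ≤ a * (2 * c) := mul_le_mul_of_nonneg_left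
        (integral_abs_le_two_mul_of_abs_setIntegral_le hm
          (stronglyMeasurable_condExp.sub stronglyMeasurable_const) hφ hφA) ha
    _ = 2 * a * c := by ring

lemma abs_integral_mul_sub_le_of_abs_measureReal_inter_sub_le
    (hm : m ≤ m0) (hm' : m' ≤ m0) [IsProbabilityMeasure μ] {X Y : Ω → ℝ} {a b η : ℝ}
    (hX : StronglyMeasurable[m] X) (hY : StronglyMeasurable[m'] Y) (ha : 0 ≤ a) (hb : 0 ≤ b)
    (hXa : ∀ ω, |X ω| ≤ a) (hYb : ∀ ω, |Y ω| ≤ b)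
    (hη : ∀ A B, MeasurableSet[m] A → MeasurableSet[m'] B →
      |μ.real (A ∩ B) - μ.real A * μ.real B| ≤ η) :
    |∫ ω, X ω * Y ω ∂μ - (∫ ω, X ω ∂μ) * ∫ ω, Y ω ∂μ| ≤ 4 * a * b * η := by
  have hYint : Integrable Y μ :=
    Integrable.of_bound (hY.mono hm').aestronglyMeasurable b (ae_of_all _ hYb)
  -- The previous lemma applied to `Y` and `1_A`, with the two σ-algebras exchanged.
  have hsetY : ∀ A, MeasurableSet[m] A →
      |∫ ω in A, Y ω ∂μ - μ.real A * ∫ ω, Y ω ∂μ| ≤ 2 * b * η := by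
    intro A hA
    have hA0 : MeasurableSet A := hm _ hA
    have hind := abs_integral_mul_sub_le_of_abs_setIntegral_sub_le hm' hY hb hYb
      ((integrable_const (1 : ℝ)).indicator hA0) fun B hB => by
        rw [setIntegral_indicator hA0, integral_indicator hA0]
        simpa [Set.inter_comm, mul_comm] using hη A B hA hB
    have hYA : ∫ ω, Y ω * A.indicator (fun _ => (1 : ℝ)) ω ∂μ = ∫ ω in A, Y ω ∂μ := by
      rw [← integral_indicator hA0]
      congr 1 with ω
      by_cases hω : ω ∈ A <;> simp [hω]
    rwa [hYA, integral_indicator hA0, setIntegral_const, smul_eq_mul, mul_one,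
      mul_comm (∫ ω, Y ω ∂μ)] at hind
  calc _ ≤ 2 * a * (2 * b * η) :=
        abs_integral_mul_sub_le_of_abs_setIntegral_sub_le hm hX ha hXa hYint hsetY
    _ = 4 * a * b * η := by ring

end Covariance

section ConvergenceInMeasure
variable {Ω ι : Type*} [MeasurableSpace Ω] {μ : Measure Ω} [IsFiniteMeasure μ] {l : Filter ι}

lemma tendstoInMeasure_zero_of_tendsto_integral_sq {Y : ι → Ω → ℝ}
    (hY : ∀ i, Integrable (fun ω => Y i ω ^ 2) μ)
    (h : Tendsto (fun i => ∫ ω, Y i ω ^ 2 ∂μ) l (𝓝 0)) :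
    TendstoInMeasure μ Y l (fun _ => 0) := by
  rw [tendstoInMeasure_iff_measureReal_norm]
  intro e he
  have hchebyshev : ∀ i, μ.real {ω | e ≤ ‖Y i ω - 0‖} ≤ (∫ ω, Y i ω ^ 2 ∂μ) / e ^ 2 := by
    intro i
    have hset : {ω | e ≤ ‖Y i ω - 0‖} = {ω | e ^ 2 ≤ Y i ω ^ 2} := by
      ext ω
      simp only [Set.mem_ofPred_eq, sub_zero, Real.norm_eq_abs, ← sq_abs (Y i ω)]
      exact (sq_le_sq₀ he.le (abs_nonneg _)).symm
    rw [hset, le_div_iff₀ (by positivity), mul_comm]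
    exact mul_meas_ge_le_integral_of_nonneg (ae_of_all _ fun ω => sq_nonneg _) (hY i) _
  exact squeeze_zero (fun i => measureReal_nonneg) hchebyshev (by simpa using h.div_const (e ^ 2))

lemma tendstoInMeasure_zero_of_forall_integral_abs_sub_le {X : ι → Ω → ℝ}
    (h : ∀ δ > 0, ∃ Y : ι → Ω → ℝ, TendstoInMeasure μ Y l (fun _ => 0) ∧
      ∀ᶠ i in l, Integrable (fun ω => X i ω - Y i ω) μ ∧ ∫ ω, |X i ω - Y i ω| ∂μ ≤ δ) :
    TendstoInMeasure μ X l (fun _ => 0) := by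
  rw [tendstoInMeasure_iff_measureReal_norm]
  intro e he
  refine tendsto_order.2 ⟨fun a ha => Eventually.of_forall fun i => ha.trans_le measureReal_nonneg,
    fun r hr => ?_⟩
  obtain ⟨Y, hY, hXY⟩ := h (r * e / 4) (by positivity)
  have hYe := (tendstoInMeasure_iff_measureReal_norm.1 hY (e / 2) (half_pos he)).eventually
    (gt_mem_nhds (half_pos hr))
  filter_upwards [hYe, hXY] with i hYi ⟨hint, hle⟩
  have hsub : {ω | e ≤ ‖X i ω - 0‖}
      ⊆ {ω | e / 2 ≤ ‖Y i ω - 0‖} ∪ {ω | e / 2 ≤ |X i ω - Y i ω|} := by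
    intro ω hω
    simp only [Set.mem_ofPred_eq, Set.mem_union, sub_zero, Real.norm_eq_abs] at hω ⊢
    by_contra! hc
    linarith [abs_sub_abs_le_abs_sub (X i ω) (Y i ω)]
  have hmarkov : e / 2 * μ.real {ω | e / 2 ≤ |X i ω - Y i ω|} ≤ e / 2 * (r / 2) :=
    (mul_meas_ge_le_integral_of_nonneg (ae_of_all _ fun _ => abs_nonneg _) hint.abs _).trans
      (hle.trans_eq (by ring))
  calc μ.real {ω | e ≤ ‖X i ω - 0‖}
      ≤ μ.real {ω | e / 2 ≤ ‖Y i ω - 0‖} + μ.real {ω | e / 2 ≤ |X i ω - Y i ω|} :=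
        (measureReal_mono hsub).trans (measureReal_union_le _ _)
    _ < r / 2 + r / 2 := add_lt_add_of_lt_of_le hYi (le_of_mul_le_mul_left hmarkov (half_pos he))
    _ = r := add_halves r

end ConvergenceInMeasure

lemma integral_abs_average_le {Ω ι : Type*} [MeasurableSpace Ω] {μ : Measure Ω} {g : ι → Ω → ℝ}
    (s : Finset ι) {δ : ℝ} (hδ : 0 ≤ δ) (hg : ∀ k ∈ s, Integrable (g k) μ)
    (hgδ : ∀ k ∈ s, ∫ ω, |g k ω| ∂μ ≤ δ) :
    ∫ ω, |(s.card : ℝ)⁻¹ * ∑ k ∈ s, g k ω| ∂μ ≤ δ := by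
  calc ∫ ω, |(s.card : ℝ)⁻¹ * ∑ k ∈ s, g k ω| ∂μ
      ≤ ∫ ω, (s.card : ℝ)⁻¹ * ∑ k ∈ s, |g k ω| ∂μ := by
        refine integral_mono ((integrable_finsetSum _ hg).const_mul _).abs
          ((integrable_finsetSum _ fun k hk => (hg k hk).abs).const_mul _) fun ω => ?_
        rw [abs_mul, abs_of_nonneg (by positivity)]
        exact mul_le_mul_of_nonneg_left (Finset.abs_sum_le_sum_abs _ _) (by positivity)
    _ = (s.card : ℝ)⁻¹ * ∑ k ∈ s, ∫ ω, |g k ω| ∂μ := by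
        rw [integral_const_mul, integral_finsetSum _ fun k hk => (hg k hk).abs]
    _ ≤ (s.card : ℝ)⁻¹ * (s.card * δ) := by
        gcongr
        simpa using Finset.sum_le_card_nsmul s _ δ hgδ
    _ ≤ δ := by
        rcases s.eq_empty_or_nonempty with rfl | hs
        · simpa using hδ
        · rw [inv_mul_cancel_left₀ (by positivity)]

lemma abs_sub_truncation_le_indicator {α : Type*} (f : α → ℝ) {M A : ℝ} (hMA : M < A) (x : α) :
    |f x - truncation f A x| ≤ {y | M < |f y|}.indicator (fun y => |f y|) x := by
  by_cases hx : f x ∈ Set.Ioc (-A) A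
  · simp only [truncation, Function.comp_apply, Set.indicator_of_mem hx, id, sub_self, abs_zero]
    exact Set.indicator_nonneg (fun _ _ => abs_nonneg _) x
  · have hM : M < |f x| := by
      simp only [Set.mem_Ioc, not_and_or, not_lt, not_le] at hx
      rcases hx with hx | hx
      · exact hMA.trans_le ((le_neg_of_le_neg hx).trans (neg_le_abs _))
      · exact hMA.trans (hx.trans_le (le_abs_self _))
    simp only [truncation, Function.comp_apply, Set.indicator_of_notMem hx, sub_zero]
    rw [Set.indicator_of_mem (show x ∈ {y | M < |f y|} from hM)]

lemma integral_abs_sub_truncation_add_integral_le {Ω : Type*} [MeasurableSpace Ω]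
    {μ : Measure Ω} [IsProbabilityMeasure μ] {V : Ω → ℝ} (hV : Integrable V μ)
    (hV0 : ∫ ω, V ω ∂μ = 0) {M A δ : ℝ} (hMA : M < A)
    (htail : ∫ ω in {ω | M < |V ω|}, |V ω| ∂μ ≤ δ) :
    ∫ ω, |V ω - truncation V A ω + ∫ ω', truncation V A ω' ∂μ| ∂μ ≤ 2 * δ := by
  have htrunc : Integrable (truncation V A) μ := hV.1.integrable_truncation
  have hsub : Integrable (fun ω => V ω - truncation V A ω) μ := hV.sub htrunc
  have htailset : NullMeasurableSet {ω | M < |V ω|} μ :=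
    nullMeasurableSet_lt aemeasurable_const hV.1.aemeasurable.abs
  have hdiff : ∫ ω, |V ω - truncation V A ω| ∂μ ≤ δ := by
    refine (integral_mono hsub.abs (hV.abs.indicator₀ htailset)
      (abs_sub_truncation_le_indicator V hMA)).trans ?_
    rwa [integral_indicator₀ htailset]
  have hmean : |∫ ω, truncation V A ω ∂μ| ≤ δ := by
    calc |∫ ω, truncation V A ω ∂μ| = |∫ ω, (V ω - truncation V A ω) ∂μ| := by
          rw [integral_sub hV htrunc, hV0, zero_sub, abs_neg]
      _ ≤ δ := abs_integral_le_integral_abs.trans hdiff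
  calc ∫ ω, |V ω - truncation V A ω + ∫ ω', truncation V A ω' ∂μ| ∂μ
      ≤ ∫ ω, (|V ω - truncation V A ω| + |∫ ω', truncation V A ω' ∂μ|) ∂μ :=
        integral_mono (hsub.add (integrable_const _)).abs
          (hsub.abs.add (integrable_const _)) fun ω => abs_add_le _ _
    _ = ∫ ω, |V ω - truncation V A ω| ∂μ + |∫ ω', truncation V A ω' ∂μ| := by
        rw [integral_add hsub.abs (integrable_const _), integral_const]
        simp
    _ ≤ 2 * δ := by linarith

lemma sum_Icc_dist_le (f : ℕ → ℝ) (hf : ∀ m, 0 ≤ f m) {n j : ℕ} (hj : j ∈ Finset.Icc 1 n) :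
    ∑ k ∈ Finset.Icc 1 n, f (Nat.dist j k) ≤ 2 * ∑ m ∈ Finset.range n, f m := by
  rw [Finset.mem_Icc] at hj
  have hsplit : Finset.Icc 1 n = Finset.Icc 1 j ∪ Finset.Ioc j n := by
    ext k; simp only [Finset.mem_Icc, Finset.mem_union, Finset.mem_Ioc]; omega
  have hdisj : Disjoint (Finset.Icc 1 j) (Finset.Ioc j n) :=
    Finset.disjoint_left.2 fun k hk hk' => by
      simp only [Finset.mem_Icc, Finset.mem_Ioc] at hk hk'; omega
  -- On each side of `j`, `k ↦ Nat.dist j k` is injective with values in `range n`.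
  have hside : ∀ s : Finset ℕ, Set.InjOn (Nat.dist j) s → (∀ k ∈ s, Nat.dist j k < n) →
      ∑ k ∈ s, f (Nat.dist j k) ≤ ∑ m ∈ Finset.range n, f m := fun s hinj hlt => by
    rw [← Finset.sum_image hinj]
    exact Finset.sum_le_sum_of_subset_of_nonneg
      (Finset.image_subset_iff.2 fun k hk => Finset.mem_range.2 (hlt k hk)) fun m _ _ => hf m
  rw [hsplit, Finset.sum_union hdisj, two_mul]
  refine add_le_add (hside _ (fun a ha b hb hab => ?_) fun k hk => ?_)
    (hside _ (fun a ha b hb hab => ?_) fun k hk => ?_)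
  all_goals
    simp only [Finset.coe_Icc, Finset.coe_Ioc, Set.mem_Icc, Set.mem_Ioc, Finset.mem_Icc,
      Finset.mem_Ioc] at *
    simp only [Nat.dist] at *
    omega

section StationaryMixing
variable {Ω E : Type*} [MeasurableSpace Ω] [MeasurableSpace E] {P : Measure Ω} {ε : ℕ → Ω → E}

lemma identDistrib_of_map_shift_eq (hε : ∀ k, Measurable (ε k))
    (hstat : ∀ k : ℕ, Measure.map (fun ω (i : ℕ) => ε (i + k) ω) P
      = Measure.map (fun ω (i : ℕ) => ε i ω) P) (j k : ℕ) :
    IdentDistrib (ε j) (ε k) P P := by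
  have h0 : ∀ k, IdentDistrib (ε k) (ε 0) P P := fun k =>
    { aemeasurable_fst := (hε k).aemeasurable
      aemeasurable_snd := (hε 0).aemeasurable
      map_eq := by
        have := congrArg (Measure.map fun x : ℕ → E => x 0) (hstat k)
        rw [Measure.map_map (measurable_pi_apply 0) (measurable_pi_lambda _ fun i => hε (i + k)),
          Measure.map_map (measurable_pi_apply 0) (measurable_pi_lambda _ hε)] at this
        simpa only [Function.comp_def, zero_add] using this }
  exact (h0 j).trans (h0 k).symm

variable [IsProbabilityMeasure P]

lemma integral_abs_average_sub_average_truncation_le {ξ : Ω → E}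
    (hlaw : ∀ k, IdentDistrib (ε k) ξ P P) {G : ℕ → E → ℝ} (hG : ∀ k, Measurable (G k))
    (n : ℕ) {M A δ : ℝ} (hMA : M < A) (hδ : 0 ≤ δ)
    (hint : ∀ k ∈ Finset.Icc 1 n, Integrable (fun ω => G k (ξ ω)) P)
    (hcent : ∀ k ∈ Finset.Icc 1 n, ∫ ω, G k (ξ ω) ∂P = 0)
    (htail : ∀ k ∈ Finset.Icc 1 n, ∫ ω in {ω | M < |G k (ξ ω)|}, |G k (ξ ω)| ∂P ≤ δ) :
    Integrable (fun ω => (n : ℝ)⁻¹ * ∑ k ∈ Finset.Icc 1 n, G k (ε k ω)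
      - (n : ℝ)⁻¹ * ∑ k ∈ Finset.Icc 1 n, (truncation (fun ω => G k (ε k ω)) A ω
        - ∫ ω', truncation (fun ω => G k (ξ ω)) A ω' ∂P)) P ∧
    ∫ ω, |(n : ℝ)⁻¹ * ∑ k ∈ Finset.Icc 1 n, G k (ε k ω)
      - (n : ℝ)⁻¹ * ∑ k ∈ Finset.Icc 1 n, (truncation (fun ω => G k (ε k ω)) A ω
        - ∫ ω', truncation (fun ω => G k (ξ ω)) A ω' ∂P)| ∂P ≤ 2 * δ := by
  set D : ℕ → Ω → ℝ := fun k ω => G k (ε k ω) - truncation (fun ω => G k (ε k ω)) A ω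
    + ∫ ω', truncation (fun ω => G k (ξ ω)) A ω' ∂P
  have hD : ∀ k ∈ Finset.Icc 1 n, Integrable (D k) P ∧ ∫ ω, |D k ω| ∂P ≤ 2 * δ := by
    intro k hk
    have hlawG : IdentDistrib (fun ω => G k (ε k ω)) (fun ω => G k (ξ ω)) P P :=
      (hlaw k).comp (hG k)
    have hφ : Measurable fun y : ℝ =>
        |y - Set.indicator (Set.Ioc (-A) A) id y + ∫ ω', truncation (fun ω => G k (ξ ω)) A ω' ∂P| :=
      ((measurable_id.sub (measurable_id.indicator measurableSet_Ioc)).add_const _).abs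
    refine ⟨((hlawG.integrable_iff.2 (hint k hk)).sub
      hlawG.aemeasurable_fst.aestronglyMeasurable.integrable_truncation).add
        (integrable_const _), ?_⟩
    exact (hlawG.comp hφ).integral_eq.trans_le
      (integral_abs_sub_truncation_add_integral_le (hint k hk) (hcent k hk) hMA (htail k hk))
  have hsplit : ∀ ω, (n : ℝ)⁻¹ * ∑ k ∈ Finset.Icc 1 n, G k (ε k ω)
      - (n : ℝ)⁻¹ * ∑ k ∈ Finset.Icc 1 n, (truncation (fun ω => G k (ε k ω)) A ω
        - ∫ ω', truncation (fun ω => G k (ξ ω)) A ω' ∂P)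
      = ((Finset.Icc 1 n).card : ℝ)⁻¹ * ∑ k ∈ Finset.Icc 1 n, D k ω := fun ω => by
    rw [Nat.card_Icc, Nat.add_sub_cancel, ← mul_sub, ← Finset.sum_sub_distrib]
    exact congrArg _ (Finset.sum_congr rfl fun k _ => by ring)
  simp_rw [hsplit]
  exact ⟨(integrable_finsetSum _ fun k hk => (hD k hk).1).const_mul _,
    integral_abs_average_le _ (by positivity) (fun k hk => (hD k hk).1) fun k hk => (hD k hk).2⟩

lemma abs_measureReal_inter_sub_le_alphaMix {j k : ℕ} (hjk : j < k) {A B : Set Ω}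
    (hA : MeasurableSet[MeasurableSpace.comap (ε j) inferInstance] A)
    (hB : MeasurableSet[MeasurableSpace.comap (ε k) inferInstance] B) :
    |P.real (A ∩ B) - P.real A * P.real B| ≤ alphaMix P ε (k - j) / 2 := by
  obtain ⟨m, hm⟩ : ∃ m, k - j = m + 1 := ⟨k - j - 1, by omega⟩
  rw [hm, alphaMix, mul_div_cancel_left₀ _ two_ne_zero]
  refine le_csSup ⟨1, ?_⟩ ⟨j, A, B, ?_, ?_, rfl⟩
  · rintro _ ⟨ℓ, A, B, -, -, rfl⟩
    simp only [← measureReal_def]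
    have hAB : P.real A * P.real B ≤ 1 :=
      mul_le_one₀ measureReal_le_one measureReal_nonneg measureReal_le_one
    have hAB₀ : 0 ≤ P.real A * P.real B := mul_nonneg measureReal_nonneg measureReal_nonneg
    have hI : P.real (A ∩ B) ≤ 1 := measureReal_le_one
    have hI₀ : 0 ≤ P.real (A ∩ B) := measureReal_nonneg
    exact abs_sub_le_iff.2 ⟨by linarith, by linarith⟩
  · exact le_iSup₂ (f := fun i (_ : i ∈ {i : ℕ | i ≤ j}) =>
      MeasurableSpace.comap (ε i) inferInstance) j (le_refl j) _ hA
  · exact le_iSup₂ (f := fun i (_ : i ∈ {i : ℕ | m + 1 + j ≤ i}) =>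
      MeasurableSpace.comap (ε i) inferInstance) k (show m + 1 + j ≤ k by omega) _ hB

lemma alphaMix_nonneg (k : ℕ) : 0 ≤ alphaMix P ε k := by
  rcases k.eq_zero_or_pos with rfl | hk
  · norm_num [alphaMix]
  · have := abs_measureReal_inter_sub_le_alphaMix (P := P) hk
      (@MeasurableSet.empty _ (MeasurableSpace.comap (ε 0) inferInstance))
      (@MeasurableSet.empty _ (MeasurableSpace.comap (ε k) inferInstance))
    rw [Nat.sub_zero] at this
    linarith [abs_nonneg (P.real (∅ ∩ ∅) - P.real ∅ * P.real ∅)]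

lemma abs_integral_mul_le_alphaMix (hε : ∀ k, Measurable (ε k)) {X Y : Ω → ℝ} {b : ℝ} {j k : ℕ}
    (hjk : j ≤ k) (hX : StronglyMeasurable[MeasurableSpace.comap (ε j) inferInstance] X)
    (hY : StronglyMeasurable[MeasurableSpace.comap (ε k) inferInstance] Y) (hb : 0 ≤ b)
    (hXb : ∀ ω, |X ω| ≤ b) (hYb : ∀ ω, |Y ω| ≤ b) (hY0 : ∫ ω, Y ω ∂P = 0) :
    |∫ ω, X ω * Y ω ∂P| ≤ 2 * b ^ 2 * alphaMix P ε (k - j) := by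
  rcases hjk.eq_or_lt with rfl | hjk
  · -- The convention `α₀ = 1/2` makes the trivial bound `b ^ 2` an instance of the formula.
    rw [Nat.sub_self, alphaMix]
    calc |∫ ω, X ω * Y ω ∂P| ≤ ∫ _, b ^ 2 ∂P := by
          refine abs_integral_le_integral_abs.trans (integral_mono_of_nonneg
            (ae_of_all _ fun _ => abs_nonneg _) (integrable_const _) (ae_of_all _ fun ω => ?_))
          show |X ω * Y ω| ≤ b ^ 2
          rw [abs_mul, sq]
          exact mul_le_mul (hXb ω) (hYb ω) (abs_nonneg _) hb
      _ = 2 * b ^ 2 * (1 / 2) := by rw [integral_const, probReal_univ, one_smul]; ring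
  · have := abs_integral_mul_sub_le_of_abs_measureReal_inter_sub_le (hε j).comap_le
      (hε k).comap_le hX hY hb hb hXb hYb fun A B hA hB =>
        abs_measureReal_inter_sub_le_alphaMix (P := P) hjk hA hB
    rw [hY0, mul_zero, sub_zero] at this
    linarith

lemma integral_sq_sum_le_alphaMix (hε : ∀ k, Measurable (ε k)) {Z : ℕ → Ω → ℝ} {b : ℝ}
    (hb : 0 ≤ b) (hZ : ∀ k, StronglyMeasurable[MeasurableSpace.comap (ε k) inferInstance] (Z k))
    (hZb : ∀ k ω, |Z k ω| ≤ b) (hZ0 : ∀ k, ∫ ω, Z k ω ∂P = 0) (n : ℕ) :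
    ∫ ω, (∑ k ∈ Finset.Icc 1 n, Z k ω) ^ 2 ∂P
      ≤ 4 * b ^ 2 * n * ∑ m ∈ Finset.range n, alphaMix P ε m := by
  have hZm : ∀ k, AEStronglyMeasurable (Z k) P :=
    fun k => ((hZ k).mono (hε k).comap_le).aestronglyMeasurable
  have hprod : ∀ j k, Integrable (fun ω => Z j ω * Z k ω) P := fun j k =>
    (Integrable.of_bound (hZm k) b (ae_of_all _ (hZb k))).bdd_mul (hZm j) (ae_of_all _ (hZb j))
  have hpair : ∀ j k, |∫ ω, Z j ω * Z k ω ∂P| ≤ 2 * b ^ 2 * alphaMix P ε (Nat.dist j k) := by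
    intro j k
    rcases le_total j k with h | h
    · rw [Nat.dist_eq_sub_of_le h]
      exact abs_integral_mul_le_alphaMix hε h (hZ j) (hZ k) hb (hZb j) (hZb k) (hZ0 k)
    · rw [Nat.dist_eq_sub_of_le_right h]
      simp_rw [mul_comm (Z j _)]
      exact abs_integral_mul_le_alphaMix hε h (hZ k) (hZ j) hb (hZb k) (hZb j) (hZ0 j)
  calc ∫ ω, (∑ k ∈ Finset.Icc 1 n, Z k ω) ^ 2 ∂P
      = ∑ j ∈ Finset.Icc 1 n, ∑ k ∈ Finset.Icc 1 n, ∫ ω, Z j ω * Z k ω ∂P := by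
        simp_rw [sq, Finset.sum_mul_sum]
        rw [integral_finsetSum _ fun j _ => integrable_finsetSum _ fun k _ => hprod j k]
        exact Finset.sum_congr rfl fun j _ => integral_finsetSum _ fun k _ => hprod j k
    _ ≤ ∑ j ∈ Finset.Icc 1 n, 2 * b ^ 2 * ∑ k ∈ Finset.Icc 1 n, alphaMix P ε (Nat.dist j k) := by
        simp_rw [Finset.mul_sum]
        exact Finset.sum_le_sum fun j _ => Finset.sum_le_sum fun k _ =>
          (le_abs_self _).trans (hpair j k)
    _ ≤ ∑ j ∈ Finset.Icc 1 n, 2 * b ^ 2 * (2 * ∑ m ∈ Finset.range n, alphaMix P ε m) :=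
        Finset.sum_le_sum fun j hj => mul_le_mul_of_nonneg_left
          (sum_Icc_dist_le _ alphaMix_nonneg hj) (by positivity)
    _ = 4 * b ^ 2 * n * ∑ m ∈ Finset.range n, alphaMix P ε m := by
        rw [Finset.sum_const, Nat.card_Icc, nsmul_eq_mul, Nat.add_sub_cancel]
        ring

lemma tendstoInMeasure_average_of_alphaMix (hε : ∀ k, Measurable (ε k))
    (hmix : Tendsto (alphaMix P ε) atTop (𝓝 0)) {Z : ℕ → ℕ → Ω → ℝ} {b : ℝ} (hb : 0 ≤ b)
    (hZ : ∀ n k, StronglyMeasurable[MeasurableSpace.comap (ε k) inferInstance] (Z n k))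
    (hZb : ∀ n k ω, |Z n k ω| ≤ b) (hZ0 : ∀ n k, ∫ ω, Z n k ω ∂P = 0) :
    TendstoInMeasure P (fun (n : ℕ) ω => (n : ℝ)⁻¹ * ∑ k ∈ Finset.Icc 1 n, Z n k ω) atTop
      (fun _ => 0) := by
  have hZm : ∀ n k, AEStronglyMeasurable (Z n k) P :=
    fun n k => ((hZ n k).mono (hε k).comap_le).aestronglyMeasurable
  refine tendstoInMeasure_zero_of_tendsto_integral_sq (fun n => ?_) ?_
  · have hL : ∀ k, MemLp (Z n k) 2 P := fun k => MemLp.of_bound (hZm n k) b (ae_of_all _ (hZb n k))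
    have hsum : MemLp (fun ω => ∑ k ∈ Finset.Icc 1 n, Z n k ω) 2 P :=
      memLp_finsetSum _ fun k _ => hL k
    exact (hsum.const_mul ((n : ℝ)⁻¹)).integrable_sq
  refine squeeze_zero (fun n => integral_nonneg fun ω => sq_nonneg _) (fun n => ?_)
    (by simpa using hmix.cesaro.const_mul (4 * b ^ 2))
  simp_rw [mul_pow]
  rw [integral_const_mul]
  calc ((n : ℝ)⁻¹) ^ 2 * ∫ ω, (∑ k ∈ Finset.Icc 1 n, Z n k ω) ^ 2 ∂P
      ≤ ((n : ℝ)⁻¹) ^ 2 * (4 * b ^ 2 * n * ∑ m ∈ Finset.range n, alphaMix P ε m) :=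
        mul_le_mul_of_nonneg_left
          (integral_sq_sum_le_alphaMix hε hb (hZ n) (hZb n) (hZ0 n) n) (by positivity)
    _ = 4 * b ^ 2 * ((n : ℝ)⁻¹ * ∑ m ∈ Finset.range n, alphaMix P ε m) := by
        rcases n.eq_zero_or_pos with rfl | hn
        · simp
        · field_simp

lemma tendstoInMeasure_average_truncation_sub_integral (hε : ∀ k, Measurable (ε k))
    (hmix : Tendsto (alphaMix P ε) atTop (𝓝 0)) {ξ : Ω → E}
    (hlaw : ∀ k, IdentDistrib (ε k) ξ P P) {G : ℕ → ℕ → E → ℝ} (hG : ∀ n k, Measurable (G n k))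
    (A : ℝ) :
    TendstoInMeasure P (fun (n : ℕ) ω => (n : ℝ)⁻¹ * ∑ k ∈ Finset.Icc 1 n,
      (truncation (fun ω => G n k (ε k ω)) A ω - ∫ ω', truncation (fun ω => G n k (ξ ω)) A ω' ∂P))
      atTop (fun _ => 0) := by
  have hmean : ∀ n k, |∫ ω, truncation (fun ω => G n k (ξ ω)) A ω ∂P| ≤ |A| := fun n k => by
    simpa using norm_integral_le_of_norm_le_const (μ := P)
      (f := truncation (fun ω => G n k (ξ ω)) A) (C := |A|)
      (ae_of_all _ (abs_truncation_le_bound _ A))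
  refine tendstoInMeasure_average_of_alphaMix hε hmix (b := 2 * |A|) (by positivity)
    (fun n k => ?_) (fun n k ω => ?_) (fun n k => ?_)
  · exact ((((measurable_id.indicator measurableSet_Ioc).comp (hG n k)).comp
      (comap_measurable (ε k))).sub measurable_const).stronglyMeasurable
  · linarith [abs_sub (truncation (fun ω => G n k (ε k ω)) A ω)
      (∫ ω, truncation (fun ω => G n k (ξ ω)) A ω ∂P),
      abs_truncation_le_bound (fun ω => G n k (ε k ω)) A ω, hmean n k]
  · have hlawG : IdentDistrib (fun ω => G n k (ε k ω)) (fun ω => G n k (ξ ω)) P P :=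
      (hlaw k).comp (hG n k)
    rw [integral_sub hlawG.aemeasurable_fst.aestronglyMeasurable.integrable_truncation
      (integrable_const _), integral_const, hlawG.truncation.integral_eq]
    simp

end StationaryMixing

theorem stmt_14_general
    {Ω : Type*} [MeasurableSpace Ω] (P : Measure Ω) [IsProbabilityMeasure P]
    {d : ℕ} (ε : ℕ → Ω → EuclideanSpace ℝ (Fin d))
    (hmeas : ∀ k, Measurable (ε k))
    -- stationarity
    (hstat : ∀ k : ℕ, Measure.map (fun ω (i : ℕ) => ε (i + k) ω) P
      = Measure.map (fun ω (i : ℕ) => ε i ω) P)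
    -- strong mixing
    (hmix : Tendsto (alphaMix P ε) atTop (𝓝 0))
    (F : EuclideanSpace ℝ (Fin d) → ℝ → ℝ)
    (hF : Measurable (fun q : EuclideanSpace ℝ (Fin d) × ℝ => F q.1 q.2))
    (hint : ∀ t ∈ Set.Icc (0:ℝ) 1, Integrable (fun ω => F (ε 1 ω) t) P)
    (hcent : ∀ t ∈ Set.Icc (0:ℝ) 1, ∫ ω, F (ε 1 ω) t ∂P = 0)
    (hUI : ∀ δ > (0:ℝ), ∃ M : ℝ, ∀ t ∈ Set.Icc (0:ℝ) 1,
      ∫ ω in {ω | M < |F (ε 1 ω) t|}, |F (ε 1 ω) t| ∂P ≤ δ) :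
    TendstoInMeasure P
      (fun (n : ℕ) ω => (n:ℝ)⁻¹ * ∑ k ∈ Finset.Icc 1 n, F (ε k ω) ((k:ℝ)/(n:ℝ)))
      atTop (fun _ => (0:ℝ)) := by
  have hFt : ∀ t, Measurable fun x => F x t :=
    fun t => hF.comp (measurable_id.prodMk measurable_const)
  have hlaw : ∀ k, IdentDistrib (ε k) (ε 1) P P :=
    fun k => identDistrib_of_map_shift_eq hmeas hstat k 1
  have hgrid : ∀ n k : ℕ, k ∈ Finset.Icc 1 n → (k : ℝ) / n ∈ Set.Icc (0 : ℝ) 1 := fun n k hk => by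
    rw [Finset.mem_Icc] at hk
    exact ⟨by positivity, div_le_one_of_le₀ (by exact_mod_cast hk.2) (by positivity)⟩
  refine tendstoInMeasure_zero_of_forall_integral_abs_sub_le fun δ hδ => ?_
  obtain ⟨M, hM⟩ := hUI (δ / 2) (half_pos hδ)
  refine ⟨_, tendstoInMeasure_average_truncation_sub_integral hmeas hmix hlaw
    (G := fun n k x => F x (k / n)) (fun n k => hFt _) (M + 1), Eventually.of_forall fun n => ?_⟩
  have := integral_abs_average_sub_average_truncation_le hlaw (G := fun k x => F x (k / n))
    (fun k => hFt _) n (lt_add_one M) (half_pos hδ).le (fun k hk => hint _ (hgrid n k hk))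
    (fun k hk => hcent _ (hgrid n k hk)) fun k hk => hM _ (hgrid n k hk)
  rwa [mul_div_cancel₀ δ two_ne_zero] at this

/-- Law of large numbers for triangular arrays built from a stationary strongly
mixing sequence: if `(ε_k)` is stationary with strong mixing coefficients `α_k → 0`, `F` is
measurable with `E F(ε₁,t) = 0` for all `t ∈ [0,1]`, `sup_{t∈[0,1]} E|F(ε₁,t)| < ∞` and the
family `{F(ε₁,t)}` is uniformly integrable uniformly in `t`, then
`(1/n) ∑_{k=1}^n F(ε_k, k/n) → 0` in probability. -/
theorem stmt_14
    {Ω : Type*} [MeasurableSpace Ω] (P : Measure Ω) [IsProbabilityMeasure P]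
    {d : ℕ} (ε : ℕ → Ω → EuclideanSpace ℝ (Fin d))
    (hmeas : ∀ k, Measurable (ε k))
    -- stationarity
    (hstat : ∀ k : ℕ, Measure.map (fun ω (i : ℕ) => ε (i + k) ω) P
      = Measure.map (fun ω (i : ℕ) => ε i ω) P)
    -- strong mixing
    (hmix : Tendsto (alphaMix P ε) atTop (𝓝 0))
    (F : EuclideanSpace ℝ (Fin d) → ℝ → ℝ)
    (hF : Measurable (fun q : EuclideanSpace ℝ (Fin d) × ℝ => F q.1 q.2))
    (hint : ∀ t ∈ Set.Icc (0:ℝ) 1, Integrable (fun ω => F (ε 1 ω) t) P)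
    (hcent : ∀ t ∈ Set.Icc (0:ℝ) 1, ∫ ω, F (ε 1 ω) t ∂P = 0)
    (hbound : ∃ C : ℝ, ∀ t ∈ Set.Icc (0:ℝ) 1, ∫ ω, |F (ε 1 ω) t| ∂P ≤ C)
    (hUI : ∀ δ > (0:ℝ), ∃ M : ℝ, ∀ t ∈ Set.Icc (0:ℝ) 1,
      ∫ ω in {ω | M < |F (ε 1 ω) t|}, |F (ε 1 ω) t| ∂P ≤ δ) :
    TendstoInMeasure P
      (fun (n : ℕ) ω => (n:ℝ)⁻¹ * ∑ k ∈ Finset.Icc 1 n, F (ε k ω) ((k:ℝ)/(n:ℝ)))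
      atTop (fun _ => (0:ℝ)) :=
  stmt_14_general P ε hmeas hstat hmix F hF hint hcent hUI
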